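/- Let F : ℝ × ℝ^d → ℝ^d be bounded and satisfy |F(t, z̄) − F(t, z)| ≤ L|z̄ − z| for all t, z, z̄ and some L > 0. Let x : [a,s] → ℝ^d solve ẋ = F(t,x). Fix ε > 0 and any τ with 0 < τ < min(s−a, ε/(4L), ε/(8L‖F‖_∞)), and set ρ = τε/4. Then for every y with |x(s) − y| < ρ there is a control u with ‖u‖_∞ < ε vanishing on [a, s−τ] and a solution x_ε of ẋ_ε = F(t, x_ε) + u(t) with x_ε = x on [a, s−τ] and x_ε(s) = y. -/

import Mathlib

/-!
Keep `x` up to time `s - τ` and then add the linear ramp `(t - (s - τ)) / τ • (y - x s)`, which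
reaches `y` at time `s`. The control that makes the ramped path a solution is the drift mismatch
`F (t, x) - F (t, x_ε)` plus the ramp slope `(y - x s) / τ`. The slope is below `ε / 4` because
`|y - x s| < τ ε / 4`, and the mismatch is at most `min (2 ‖F‖_∞, L τ ε / 4) ≤ ε / 2` by the
choice of `τ`.
-/

open Metric Set
noncomputable section

/-- A function is piecewise continuous on a set if it is continuous there
except possibly at finitely many points. -/
def PiecewiseContinuousOn {d : ℕ} (u : ℝ → EuclideanSpace ℝ (Fin d)) (s : Set ℝ) : Prop :=
  ∃ S : Finset ℝ, ContinuousOn u (s \ (S : Set ℝ))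

lemma continuousOn_indicator_Ioc {E : Type*} [TopologicalSpace E] [Zero E] {f : ℝ → E}
    {a b c : ℝ} (hf : ContinuousOn f (Icc a b)) :
    ContinuousOn ((Ioc c b).indicator f) (Icc a b \ {c}) := by
  classical
  have hEq : EqOn ((Ioi c).piecewise f 0) ((Ioc c b).indicator f) (Icc a b \ {c}) := by
    intro t ht
    simp [piecewise, indicator, ht.1.2]
  refine ContinuousOn.congr ?_ hEq.symm
  refine ContinuousOn.piecewise ?_ ?_ continuousOn_const
  · rintro t ⟨ht, hfr⟩
    rw [frontier_Ioi] at hfr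
    exact absurd hfr ht.2
  · exact hf.mono fun t ht => ht.1.1

lemma norm_sub_le_min_of_bdd_of_lipschitz {α E G : Type*} [SeminormedAddCommGroup E]
    [SeminormedAddCommGroup G] {F : α × E → G} {M L : ℝ} (hM : ∀ p, ‖F p‖ ≤ M)
    (hF : ∀ t z z', ‖F (t, z') - F (t, z)‖ ≤ L * ‖z' - z‖) (t : α) (z z' : E) :
    ‖F (t, z') - F (t, z)‖ ≤ min (2 * M) (L * ‖z' - z‖) :=
  le_min ((norm_sub_le _ _).trans (by linarith [hM (t, z'), hM (t, z)])) (hF t z z')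

lemma min_two_mul_le_half {M L τ ε : ℝ} (hL : 0 < L) (hε : 0 < ε)
    (hτM : τ < ε / (8 * L * M)) : min (2 * M) (L * (τ * ε / 4)) ≤ ε / 2 := by
  rcases le_or_gt M (ε / 4) with hM | hM
  · exact (min_le_left _ _).trans (by linarith)
  · have hM0 : 0 < M := by linarith
    rw [lt_div_iff₀ (by positivity)] at hτM
    have hLτ : L * τ < 1 / 2 := by nlinarith
    exact (min_le_right _ _).trans (by nlinarith)

def ramp (s τ t : ℝ) : ℝ := max 0 ((t - (s - τ)) / τ)

section Ramp

variable {s τ t : ℝ}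

lemma ramp_nonneg : 0 ≤ ramp s τ t := le_max_left _ _

lemma ramp_le_one (hτ : 0 < τ) (ht : t ≤ s) : ramp s τ t ≤ 1 :=
  max_le zero_le_one ((div_le_one hτ).2 (by linarith))

lemma ramp_of_le (hτ : 0 ≤ τ) (ht : t ≤ s - τ) : ramp s τ t = 0 :=
  max_eq_left (div_nonpos_of_nonpos_of_nonneg (by linarith) hτ)

lemma ramp_self (hτ : τ ≠ 0) : ramp s τ s = 1 := by
  simp [ramp, hτ]

lemma continuous_ramp : Continuous (ramp s τ) :=
  continuous_const.max (by fun_prop)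

lemma hasDerivAt_ramp_of_lt (hτ : 0 ≤ τ) (ht : t < s - τ) : HasDerivAt (ramp s τ) 0 t :=
  (hasDerivAt_const t 0).congr_of_eventuallyEq <| by
    filter_upwards [Iio_mem_nhds ht] with r hr using ramp_of_le hτ (le_of_lt hr)

lemma hasDerivAt_ramp_of_gt (hτ : 0 ≤ τ) (ht : s - τ < t) : HasDerivAt (ramp s τ) τ⁻¹ t := by
  have hlin : HasDerivAt (fun r => (r - (s - τ)) / τ) τ⁻¹ t := by
    simpa [one_div] using ((hasDerivAt_id t).sub_const (s - τ)).div_const τ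
  refine hlin.congr_of_eventuallyEq ?_
  filter_upwards [Ioi_mem_nhds ht] with r hr
  exact max_eq_right (div_nonneg (by linarith [mem_Ioi.1 hr]) hτ)

end Ramp

section EndpointShift

variable {E : Type*} [NormedAddCommGroup E] [NormedSpace ℝ E] {x : ℝ → E} {s τ t : ℝ} {y : E}

def endpointShift (x : ℝ → E) (s τ : ℝ) (y : E) (t : ℝ) : E :=
  x t + ramp s τ t • (y - x s)

lemma endpointShift_of_le (hτ : 0 ≤ τ) (ht : t ≤ s - τ) : endpointShift x s τ y t = x t := by
  simp [endpointShift, ramp_of_le hτ ht]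

lemma endpointShift_self (hτ : τ ≠ 0) : endpointShift x s τ y s = y := by
  simp [endpointShift, ramp_self hτ]

lemma norm_endpointShift_sub_le (hτ : 0 < τ) (ht : t ≤ s) :
    ‖endpointShift x s τ y t - x t‖ ≤ ‖y - x s‖ := by
  rw [endpointShift, add_sub_cancel_left, norm_smul, Real.norm_of_nonneg ramp_nonneg]
  exact mul_le_of_le_one_left (norm_nonneg _) (ramp_le_one hτ ht)

lemma ContinuousOn.endpointShift {S : Set ℝ} (hx : ContinuousOn x S) :
    ContinuousOn (endpointShift x s τ y) S :=
  hx.add (continuous_ramp.continuousOn.smul continuousOn_const)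

lemma HasDerivAt.endpointShift_of_lt {x' : E} (hx : HasDerivAt x x' t) (hτ : 0 ≤ τ)
    (ht : t < s - τ) : HasDerivAt (endpointShift x s τ y) x' t :=
  (hx.add ((hasDerivAt_ramp_of_lt hτ ht).smul_const (y - x s))).congr_deriv (by simp)

lemma HasDerivAt.endpointShift_of_gt {x' : E} (hx : HasDerivAt x x' t) (hτ : 0 ≤ τ)
    (ht : s - τ < t) : HasDerivAt (endpointShift x s τ y) (x' + τ⁻¹ • (y - x s)) t :=
  hx.add ((hasDerivAt_ramp_of_gt hτ ht).smul_const (y - x s))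

variable (F : ℝ × E → E)

def endpointControl (x : ℝ → E) (s τ : ℝ) (y : E) : ℝ → E :=
  (Ioc (s - τ) s).indicator fun t => F (t, x t) - F (t, endpointShift x s τ y t) + τ⁻¹ • (y - x s)

lemma endpointControl_of_le (ht : t ≤ s - τ) : endpointControl F x s τ y t = 0 :=
  indicator_of_notMem (fun h => (not_lt.2 ht) h.1) _

lemma continuousOn_endpointControl {a : ℝ} (hF : Continuous F) (hx : ContinuousOn x (Icc a s)) :
    ContinuousOn (endpointControl F x s τ y) (Icc a s \ {s - τ}) := by
  refine continuousOn_indicator_Ioc (ContinuousOn.add ?_ continuousOn_const)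
  exact (hF.comp_continuousOn (continuousOn_id.prodMk hx)).sub
    (hF.comp_continuousOn (continuousOn_id.prodMk hx.endpointShift))

lemma hasDerivAt_endpointShift (hx : HasDerivAt x (F (t, x t)) t) (hτ : 0 ≤ τ) (hts : t ≤ s)
    (ht : t ≠ s - τ) :
    HasDerivAt (endpointShift x s τ y)
      (F (t, endpointShift x s τ y t) + endpointControl F x s τ y t) t := by
  rcases ht.lt_or_gt with ht | ht
  · rw [endpointControl_of_le F ht.le, endpointShift_of_le hτ ht.le, add_zero]
    exact hx.endpointShift_of_lt hτ ht
  · rw [endpointControl, indicator_of_mem (show t ∈ Ioc (s - τ) s from ⟨ht, hts⟩)]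
    convert hx.endpointShift_of_gt hτ ht using 1
    abel

lemma norm_endpointControl_lt {M L ε : ℝ} (hM : ∀ p, ‖F p‖ ≤ M)
    (hF : ∀ t z z', ‖F (t, z') - F (t, z)‖ ≤ L * ‖z' - z‖) (hL : 0 ≤ L) (hε : 0 < ε)
    (hτ : 0 < τ) (hy : ‖y - x s‖ < τ * ε / 4) (hFε : min (2 * M) (L * (τ * ε / 4)) ≤ ε / 2)
    (t : ℝ) : ‖endpointControl F x s τ y t‖ < ε := by
  by_cases ht : t ∈ Ioc (s - τ) s
  · rw [endpointControl, indicator_of_mem ht]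
    have hdrift : ‖F (t, x t) - F (t, endpointShift x s τ y t)‖ ≤ ε / 2 := by
      refine (norm_sub_le_min_of_bdd_of_lipschitz hM hF t _ _).trans (le_trans ?_ hFε)
      refine min_le_min_left _ (mul_le_mul_of_nonneg_left ?_ hL)
      rw [← norm_neg, neg_sub]
      exact ((norm_endpointShift_sub_le hτ ht.2).trans hy.le)
    have hslope : ‖τ⁻¹ • (y - x s)‖ < ε / 4 := by
      rw [norm_smul, norm_inv, Real.norm_of_nonneg hτ.le, inv_mul_lt_iff₀ hτ]
      linarith
    linarith [norm_add_le (F (t, x t) - F (t, endpointShift x s τ y t)) (τ⁻¹ • (y - x s))]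
  · simpa [endpointControl, ht] using hε

end EndpointShift

theorem endpoint_adjustment_quantitative_general
    (d : ℕ)
    (F : ℝ × EuclideanSpace ℝ (Fin d) → EuclideanSpace ℝ (Fin d))
    (hFc : Continuous F)
    (hFbdd : BddAbove (range fun p => ‖F p‖))
    (L : ℝ) (hL : 0 < L)
    (hFlip : ∀ t z z', ‖F (t, z') - F (t, z)‖ ≤ L * ‖z' - z‖)
    (a s : ℝ)
    (x : ℝ → EuclideanSpace ℝ (Fin d))
    (hx : ∀ t ∈ Icc a s, HasDerivAt x (F (t, x t)) t)
    (ε : ℝ) (hε : 0 < ε)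
    (τ : ℝ) (hτ0 : 0 < τ)
    (hτ : τ < min (s - a) (min (ε / (4 * L)) (ε / (8 * L * (⨆ p, ‖F p‖))))) :
    ∀ y : EuclideanSpace ℝ (Fin d), ‖x s - y‖ < τ * ε / 4 →
      ∃ u : ℝ → EuclideanSpace ℝ (Fin d),
        PiecewiseContinuousOn u (Icc a s) ∧
        (∀ t, ‖u t‖ < ε) ∧
        (∀ t ∈ Icc a (s - τ), u t = 0) ∧
        ∃ xe : ℝ → EuclideanSpace ℝ (Fin d),
          ContinuousOn xe (Icc a s) ∧
          (∃ S : Finset ℝ, ∀ t ∈ Icc a s \ (S : Set ℝ),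
            HasDerivAt xe (F (t, xe t) + u t) t) ∧
          (∀ t ∈ Icc a (s - τ), xe t = x t) ∧
          xe s = y := by
  intro y hy
  have hxc : ContinuousOn x (Icc a s) := fun t ht => (hx t ht).continuousAt.continuousWithinAt
  have hFε : min (2 * ⨆ p, ‖F p‖) (L * (τ * ε / 4)) ≤ ε / 2 :=
    min_two_mul_le_half hL hε (hτ.trans_le ((min_le_right _ _).trans (min_le_right _ _)))
  refine ⟨endpointControl F x s τ y, ⟨{s - τ}, ?cont⟩,
    norm_endpointControl_lt F (le_ciSup hFbdd) hFlip hL.le hε hτ0 (by rwa [norm_sub_rev]) hFε,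
    fun t ht => endpointControl_of_le F ht.2, endpointShift x s τ y, hxc.endpointShift,
    ⟨{s - τ}, fun t ht => ?deriv⟩, fun t ht => endpointShift_of_le hτ0.le ht.2,
    endpointShift_self hτ0.ne'⟩
  case cont => simpa using continuousOn_endpointControl F hFc hxc
  case deriv =>
    simp only [Finset.coe_singleton, mem_sdiff, mem_singleton_iff] at ht
    exact hasDerivAt_endpointShift F (hx t ht.1) hτ0.le ht.1.2 ht.2

/-- quantitative small-control endpoint adjustment lemma, with
explicit admissible values of `τ` and `ρ = τ ε / 4`, for a bounded right-hand
side which is `L`-Lipschitz in the state variable. -/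
theorem endpoint_adjustment_quantitative
    (d : ℕ) (hd : 1 ≤ d)
    (F : ℝ × EuclideanSpace ℝ (Fin d) → EuclideanSpace ℝ (Fin d))
    (hFc : Continuous F)
    (hFbdd : BddAbove (range fun p => ‖F p‖))
    (L : ℝ) (hL : 0 < L)
    (hFlip : ∀ t z z', ‖F (t, z') - F (t, z)‖ ≤ L * ‖z' - z‖)
    (a s : ℝ) (has : a < s)
    (x : ℝ → EuclideanSpace ℝ (Fin d))
    (hx : ∀ t ∈ Icc a s, HasDerivAt x (F (t, x t)) t)
    (ε : ℝ) (hε : 0 < ε)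
    (τ : ℝ) (hτ0 : 0 < τ)
    (hτ : τ < min (s - a) (min (ε / (4 * L)) (ε / (8 * L * (⨆ p, ‖F p‖))))) :
    ∀ y : EuclideanSpace ℝ (Fin d), ‖x s - y‖ < τ * ε / 4 →
      ∃ u : ℝ → EuclideanSpace ℝ (Fin d),
        PiecewiseContinuousOn u (Icc a s) ∧
        (∀ t, ‖u t‖ < ε) ∧
        (∀ t ∈ Icc a (s - τ), u t = 0) ∧
        ∃ xe : ℝ → EuclideanSpace ℝ (Fin d),
          ContinuousOn xe (Icc a s) ∧
          (∃ S : Finset ℝ, ∀ t ∈ Icc a s \ (S : Set ℝ),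
            HasDerivAt xe (F (t, xe t) + u t) t) ∧
          (∀ t ∈ Icc a (s - τ), xe t = x t) ∧
          xe s = y :=
  endpoint_adjustment_quantitative_general d F hFc hFbdd L hL hFlip a s x hx ε hε τ hτ0 hτ
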